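/- Let σ = √L₂/2, r = 1/(4√L₂), ε₁ = min{1/96, √L₂/(16L₁)}·ε^{3/2}, ε₂ = (√L₂/12)·ε^{1/2}. Suppose ‖g‖ ≥ ε, ‖s‖ ≤ r‖g‖^{1/2}, (H + σ‖g‖^{1/2}I)s = −g, H + σ‖g‖^{1/2}I ⪰ 0, ‖H‖ ≤ L₁, ‖∇P(x) − g‖ ≤ ε₁, ‖∇²P(x) − H‖ ≤ ε₂ (operator norm), and ‖∇P(x+s) − g₊‖ ≤ ε₁, where H is self-adjoint. Then P(x+s) ≤ P(x) and ‖g₊‖ ≤ (1/3)‖g‖. -/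

import Mathlib

noncomputable section

open RealInnerProductSpace

/-- `ℝⁿ` as a Euclidean space. -/
abbrev En (n : ℕ) := EuclideanSpace ℝ (Fin n)

/-- The Hessian of `P` at `x`, as the derivative of the gradient map. -/
def hessP {n : ℕ} (P : En n → ℝ) (x : En n) : En n →L[ℝ] En n := fderiv ℝ (gradient P) x

/-!
Write `σ = √L₂ ‖g‖^{1/2} / 2` and `M = H + σ I`, so `M s = -g` and `M ⪰ 0`. From
`‖g‖ ≤ ‖M‖ ‖s‖ ≤ (L₁ + σ) ‖g‖^{1/2} / (4 √L₂)` the regularization is small, `σ ≤ L₁ / 7`, hence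
`‖M‖ ≤ 8 L₁ / 7`, and Cauchy–Schwarz for `⟪M ·, ·⟫` gives `‖g‖² ≤ ‖M‖ ⟪M s, s⟫`, i.e. the
model decrease `-⟪g, s⟫ ≥ 7 ‖g‖² / (8 L₁)`.

Function value: by the cubic Taylor bound (Lipschitz Hessian), `P (x + s) - P x` is at most
`⟪g, s⟫ / 2 + ε₁ ‖s‖` plus `(-σ / 2 + ε₂ / 2 + L₂ ‖s‖ / 6) ‖s‖²`. Half of the model decrease
absorbs the gradient error `ε₁ ‖s‖ ≤ ‖g‖² / (64 L₁)`, and `ε₂ / 2` and `L₂ ‖s‖ / 6` are each at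
most `σ / 12`.

Gradient: `g₊` differs from `g + H s = -σ s` by two gradient errors `ε₁ ≤ ‖g‖ / 56`, the
Hessian error `ε₂ ‖s‖ ≤ ‖g‖ / 48` and the Taylor remainder `L₂ ‖s‖² / 2 ≤ ‖g‖ / 32` of `∇P`;
with `σ ‖s‖ ≤ ‖g‖ / 8` these sum to less than `‖g‖ / 3`.
-/

open Set

theorem Real.rpow_three_halves {x : ℝ} (hx : 0 ≤ x) : x ^ ((3 : ℝ) / 2) = √x ^ 3 := by
  rw [Real.sqrt_eq_rpow, ← Real.rpow_natCast, ← Real.rpow_mul hx]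
  norm_num

section NormedSpace

variable {E F : Type*} [NormedAddCommGroup E] [NormedSpace ℝ E]
  [NormedAddCommGroup F] [NormedSpace ℝ F]

theorem norm_le_div_of_norm_deriv_le_mul_pow {f f' : ℝ → F} {C : ℝ} (k : ℕ)
    (hf : ∀ t, HasDerivAt f (f' t) t) (h0 : f 0 = 0)
    (bound : ∀ t ∈ Ico (0 : ℝ) 1, ‖f' t‖ ≤ C * t ^ k) : ‖f 1‖ ≤ C / (k + 1) := by
  have hB (t : ℝ) : HasDerivAt (fun t => C / (k + 1) * t ^ (k + 1)) (C * t ^ k) t := by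
    refine ((hasDerivAt_pow (k + 1) t).const_mul (C / (k + 1))).congr_deriv ?_
    rw [add_tsub_cancel_right]
    push_cast
    field_simp
  simpa using image_norm_le_of_norm_deriv_right_le_deriv_boundary
    (fun t _ => (hf t).continuousAt.continuousWithinAt) (fun t _ => (hf t).hasDerivWithinAt)
    (by simp [h0]) hB bound (right_mem_Icc.2 zero_le_one)

theorem hasDerivAt_add_smul (x s : E) (t : ℝ) : HasDerivAt (fun t : ℝ => x + t • s) s t := by
  simpa using ((hasDerivAt_id t).smul_const s).const_add x

theorem norm_sub_sub_apply_le_of_lipschitz_fderiv {f : E → F} {f' : E → E →L[ℝ] F} {L : ℝ}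
    (hf : ∀ y, HasFDerivAt f (f' y) y) (hL : ∀ y z, ‖f' y - f' z‖ ≤ L * ‖y - z‖) (x s : E) :
    ‖f (x + s) - f x - f' x s‖ ≤ L / 2 * ‖s‖ ^ 2 := by
  have hd (t : ℝ) : HasDerivAt (fun t : ℝ => f (x + t • s) - f x - t • f' x s)
      (f' (x + t • s) s - f' x s) t := by
    simpa using (((hf _).comp_hasDerivAt t (hasDerivAt_add_smul x s t)).sub_const (f x)).fun_sub
      ((hasDerivAt_id t).smul_const (f' x s))
  have bound (t : ℝ) (ht : t ∈ Ico (0 : ℝ) 1) :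
      ‖f' (x + t • s) s - f' x s‖ ≤ L * ‖s‖ ^ 2 * t ^ 1 := by
    calc ‖f' (x + t • s) s - f' x s‖ = ‖(f' (x + t • s) - f' x) s‖ := rfl
      _ ≤ L * ‖x + t • s - x‖ * ‖s‖ := (f' (x + t • s) - f' x).le_of_opNorm_le (hL _ _) s
      _ = L * ‖s‖ ^ 2 * t ^ 1 := by
        rw [add_sub_cancel_left, norm_smul, Real.norm_of_nonneg ht.1]; ring
  have := norm_le_div_of_norm_deriv_le_mul_pow 1 hd (by simp) bound
  norm_num at this ⊢
  linarith

theorem ContinuousLinearMap.norm_add_smul_one_le (H : E →L[ℝ] E) {c : ℝ} (hc : 0 ≤ c) :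
    ‖H + c • (1 : E →L[ℝ] E)‖ ≤ ‖H‖ + c :=
  calc ‖H + c • (1 : E →L[ℝ] E)‖ ≤ ‖H‖ + ‖c‖ * ‖(1 : E →L[ℝ] E)‖ :=
        (norm_add_le _ _).trans (by gcongr; exact ContinuousLinearMap.opNorm_smul_le _ _)
    _ ≤ ‖H‖ + c := by
        rw [Real.norm_of_nonneg hc]
        gcongr
        exact mul_le_of_le_one_right hc ContinuousLinearMap.norm_id_le

theorem mul_le_of_regularized_step {H : E →L[ℝ] E} {g s : E} {a b L₁ : ℝ} (ha : 0 < a)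
    (hb : 0 < b) (hga : ‖g‖ = a ^ 2) (hH : ‖H‖ ≤ L₁) (hs : ‖s‖ ≤ 1 / (4 * b) * a)
    (heq : (H + (b / 2 * a) • (1 : E →L[ℝ] E)) s = -g) : b * a ≤ 2 / 7 * L₁ := by
  have hL₁ : 0 ≤ L₁ := (norm_nonneg H).trans hH
  have hg : a ^ 2 ≤ (L₁ + b / 2 * a) * (1 / (4 * b) * a) :=
    calc a ^ 2 = ‖(H + (b / 2 * a) • (1 : E →L[ℝ] E)) s‖ := by rw [heq, norm_neg, hga]
      _ ≤ ‖H + (b / 2 * a) • (1 : E →L[ℝ] E)‖ * ‖s‖ := ContinuousLinearMap.le_opNorm _ _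
      _ ≤ (L₁ + b / 2 * a) * (1 / (4 * b) * a) := by
        gcongr
        exact (H.norm_add_smul_one_le (by positivity)).trans (by linarith)
  have h4ba : (4 * b * a) * a ≤ (L₁ + b / 2 * a) * a := by
    calc (4 * b * a) * a = 4 * b * a ^ 2 := by ring
      _ ≤ 4 * b * ((L₁ + b / 2 * a) * (1 / (4 * b) * a)) := by gcongr
      _ = (L₁ + b / 2 * a) * a := by field_simp
  linarith [le_of_mul_le_mul_right h4ba ha]

theorem norm_le_third_of_regularized_step {G G' g gp s : E} {D H : E →L[ℝ] E} {a b δ L₁ : ℝ}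
    (ha : 0 < a) (hb : 0 < b) (hL₁ : 0 < L₁) (hga : ‖g‖ = a ^ 2) (hs : ‖s‖ ≤ 1 / (4 * b) * a)
    (hHs : g + H s = -((b / 2 * a) • s)) (hba : b * a ≤ 2 / 7 * L₁)
    (hG : ‖G - g‖ ≤ δ) (hG' : ‖G' - gp‖ ≤ δ) (hδ : δ ≤ b / (16 * L₁) * a ^ 3)
    (hD : ‖D - H‖ ≤ b / 12 * a) (hT : ‖G' - G - D s‖ ≤ b ^ 2 / 2 * ‖s‖ ^ 2) :
    ‖gp‖ ≤ 1 / 3 * ‖g‖ := by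
  have hsplit : gp = -(G' - gp) + (G' - G - D s) + (G - g) + (D - H) s + (g + H s) := by
    rw [sub_apply]; abel
  have hδa : δ ≤ a ^ 2 / 56 :=
    calc δ ≤ (b * a) * a ^ 2 / (16 * L₁) := hδ.trans_eq (by ring)
      _ ≤ 2 / 7 * L₁ * a ^ 2 / (16 * L₁) := by gcongr
      _ = a ^ 2 / 56 := by field_simp; ring
  have hTa : b ^ 2 / 2 * ‖s‖ ^ 2 ≤ a ^ 2 / 32 :=
    calc b ^ 2 / 2 * ‖s‖ ^ 2 ≤ b ^ 2 / 2 * (1 / (4 * b) * a) ^ 2 := by gcongr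
      _ = a ^ 2 / 32 := by field_simp; ring
  have hDa : ‖(D - H) s‖ ≤ a ^ 2 / 48 :=
    calc ‖(D - H) s‖ ≤ b / 12 * a * (1 / (4 * b) * a) := (D - H).le_of_opNorm_le_of_le hD hs
      _ = a ^ 2 / 48 := by field_simp; ring
  have hHa : ‖g + H s‖ ≤ a ^ 2 / 8 :=
    calc ‖g + H s‖ = b / 2 * a * ‖s‖ := by
          rw [hHs, norm_neg, norm_smul, Real.norm_of_nonneg (by positivity)]
      _ ≤ b / 2 * a * (1 / (4 * b) * a) := by gcongr
      _ = a ^ 2 / 8 := by field_simp; ring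
  calc ‖gp‖ ≤ ‖-(G' - gp)‖ + ‖G' - G - D s‖ + ‖G - g‖ + ‖(D - H) s‖ + ‖g + H s‖ := by
        conv_lhs => rw [hsplit]
        exact (norm_add_le _ _).trans (add_le_add_left norm_add₄_le _)
    _ ≤ 1 / 3 * ‖g‖ := by rw [norm_neg, hga]; linarith [sq_nonneg a]

end NormedSpace

section InnerProductSpace

variable {E : Type*} [NormedAddCommGroup E] [InnerProductSpace ℝ E]

theorem contDiff_gradient [CompleteSpace E] {f : E → ℝ} {k : WithTop ℕ∞}
    (hf : ContDiff ℝ (k + 1) f) : ContDiff ℝ k (gradient f) :=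
  (InnerProductSpace.toDual ℝ E).symm.contDiff.comp (hf.fderiv_right le_rfl)

theorem abs_sub_sub_inner_sub_le_of_lipschitz_hessian [CompleteSpace E] {f : E → ℝ} {G : E → E}
    {D : E → E →L[ℝ] E} {L : ℝ} (hf : ∀ y, HasGradientAt f (G y) y)
    (hG : ∀ y, HasFDerivAt G (D y) y) (hL : ∀ y z, ‖D y - D z‖ ≤ L * ‖y - z‖) (x s : E) :
    |f (x + s) - f x - ⟪G x, s⟫ - 1 / 2 * ⟪D x s, s⟫| ≤ L / 6 * ‖s‖ ^ 3 := by
  have hd (t : ℝ) : HasDerivAt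
      (fun t : ℝ => f (x + t • s) - f x - t * ⟪G x, s⟫ - t ^ 2 / 2 * ⟪D x s, s⟫)
      ⟪G (x + t • s) - G x - D x (t • s), s⟫ t := by
    have hline := (hf (x + t • s)).hasFDerivAt.comp_hasDerivAt t (hasDerivAt_add_smul x s t)
    have hquad := ((hasDerivAt_pow 2 t).div_const 2).mul_const ⟪D x s, s⟫
    refine (((hline.sub_const (f x)).fun_sub ((hasDerivAt_id t).mul_const ⟪G x, s⟫)).fun_sub
      hquad).congr_deriv ?_
    simp only [InnerProductSpace.toDual_apply_apply, inner_sub_left, map_smul,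
      real_inner_smul_left]
    ring
  have bound (t : ℝ) (ht : t ∈ Ico (0 : ℝ) 1) :
      ‖⟪G (x + t • s) - G x - D x (t • s), s⟫‖ ≤ L / 2 * ‖s‖ ^ 3 * t ^ 2 := by
    calc ‖⟪G (x + t • s) - G x - D x (t • s), s⟫‖
        ≤ ‖G (x + t • s) - G x - D x (t • s)‖ * ‖s‖ := norm_inner_le_norm _ _
      _ ≤ L / 2 * ‖t • s‖ ^ 2 * ‖s‖ := by
        gcongr
        exact norm_sub_sub_apply_le_of_lipschitz_fderiv hG hL x (t • s)
      _ = L / 2 * ‖s‖ ^ 3 * t ^ 2 := by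
        rw [norm_smul, Real.norm_of_nonneg ht.1]; ring
  have := norm_le_div_of_norm_deriv_le_mul_pow 2 hd (by simp) bound
  norm_num at this ⊢
  linarith

theorem ContinuousLinearMap.IsPositive.norm_apply_sq_le {T : E →L[ℝ] E} (hT : T.IsPositive)
    (s : E) : ‖T s‖ ^ 2 ≤ ‖T‖ * ⟪T s, s⟫ := by
  set u := T s
  rcases eq_or_ne u 0 with hu | hu
  · simp [hu]
  -- Cauchy–Schwarz for the semi-inner product `⟪T ·, ·⟫`, via the discriminant
  have hquad (a : ℝ) : 0 ≤ ⟪T u, u⟫ * (a * a) + 2 * ‖u‖ ^ 2 * a + ⟪T s, s⟫ := by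
    have h := hT.inner_nonneg_left (s + a • u)
    have hsu : ⟪T s, u⟫ = ‖u‖ ^ 2 := real_inner_self_eq_norm_sq u
    have hus : ⟪T u, s⟫ = ‖u‖ ^ 2 := by rw [hT.inner_left_eq_inner_right, real_inner_comm, hsu]
    simp only [map_add, map_smul, inner_add_left, inner_add_right, real_inner_smul_left,
      real_inner_smul_right, hus, hsu] at h
    linarith
  have hdisc := discrim_le_zero hquad
  have hTu : ⟪T u, u⟫ ≤ ‖T‖ * ‖u‖ ^ 2 := by
    calc ⟪T u, u⟫ ≤ ‖T u‖ * ‖u‖ := real_inner_le_norm _ _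
      _ ≤ ‖T‖ * ‖u‖ * ‖u‖ := by gcongr; exact T.le_opNorm u
      _ = ‖T‖ * ‖u‖ ^ 2 := by ring
  have hu2 : 0 < ‖u‖ ^ 2 := by positivity
  rw [discrim] at hdisc
  nlinarith [hT.inner_nonneg_left s]

theorem norm_sq_le_mul_neg_inner_of_regularized_step [CompleteSpace E] {H : E →L[ℝ] E}
    {g s : E} {σ K : ℝ} (hσ : 0 ≤ σ) (hH : IsSelfAdjoint H)
    (hpsd : ∀ v, 0 ≤ ⟪(H + σ • (1 : E →L[ℝ] E)) v, v⟫) (heq : (H + σ • (1 : E →L[ℝ] E)) s = -g)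
    (hK : ‖H‖ + σ ≤ K) : ‖g‖ ^ 2 ≤ K * -⟪g, s⟫ := by
  have hM : (H + σ • (1 : E →L[ℝ] E)).IsPositive :=
    ContinuousLinearMap.isPositive_def'.2 ⟨hH.add ((IsSelfAdjoint.all σ).smul (.one _)), hpsd⟩
  have h := hM.norm_apply_sq_le s
  rw [heq, norm_neg, inner_neg_left] at h
  have hdesc : 0 ≤ -⟪g, s⟫ := by simpa [heq] using hpsd s
  exact h.trans (by gcongr; exact (H.norm_add_smul_one_le hσ).trans hK)

theorem cubic_model_nonpos_of_regularized_step {G g s : E} {D H : E →L[ℝ] E} {a b δ L₁ : ℝ}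
    (ha : 0 < a) (hb : 0 < b) (hL₁ : 0 < L₁) (hga : ‖g‖ = a ^ 2) (hs : ‖s‖ ≤ 1 / (4 * b) * a)
    (hHs : g + H s = -((b / 2 * a) • s)) (hdesc : ‖g‖ ^ 2 ≤ 8 / 7 * L₁ * -⟪g, s⟫)
    (hG : ‖G - g‖ ≤ δ) (hδ : δ ≤ b / (16 * L₁) * a ^ 3) (hD : ‖D - H‖ ≤ b / 12 * a) :
    ⟪G, s⟫ + 1 / 2 * ⟪D s, s⟫ + b ^ 2 / 6 * ‖s‖ ^ 3 ≤ 0 := by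
  have hGs : ⟪G, s⟫ ≤ ⟪g, s⟫ + δ * ‖s‖ :=
    calc ⟪G, s⟫ = ⟪g, s⟫ + ⟪G - g, s⟫ := by rw [inner_sub_left]; ring
      _ ≤ ⟪g, s⟫ + δ * ‖s‖ := by
        gcongr
        exact (real_inner_le_norm _ _).trans (by gcongr)
  have hDs : ⟪D s, s⟫ ≤ -⟪g, s⟫ - b / 2 * a * ‖s‖ ^ 2 + b / 12 * a * ‖s‖ ^ 2 := by
    have hHss : ⟪H s, s⟫ = -⟪g, s⟫ - b / 2 * a * ‖s‖ ^ 2 := by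
      rw [eq_sub_of_add_eq' hHs, inner_sub_left, inner_neg_left, real_inner_smul_left,
        real_inner_self_eq_norm_sq]
      ring
    calc ⟪D s, s⟫ = ⟪H s, s⟫ + ⟪(D - H) s, s⟫ := by
          rw [sub_apply, inner_sub_left]; ring
      _ ≤ ⟪H s, s⟫ + b / 12 * a * ‖s‖ ^ 2 := by
          gcongr
          calc ⟪(D - H) s, s⟫ ≤ ‖(D - H) s‖ * ‖s‖ := real_inner_le_norm _ _
            _ ≤ b / 12 * a * ‖s‖ * ‖s‖ := by gcongr; exact (D - H).le_of_opNorm_le hD s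
            _ = b / 12 * a * ‖s‖ ^ 2 := by ring
      _ = _ := by rw [hHss]
  have hlin : δ * ‖s‖ ≤ -⟪g, s⟫ / 56 :=
    calc δ * ‖s‖ ≤ b / (16 * L₁) * a ^ 3 * (1 / (4 * b) * a) := by gcongr
      _ = ‖g‖ ^ 2 / (64 * L₁) := by rw [hga]; field_simp; ring
      _ ≤ -⟪g, s⟫ / 56 := by rw [div_le_div_iff₀ (by positivity) (by norm_num)]; nlinarith
  have hcubic : b ^ 2 * ‖s‖ ^ 3 ≤ b * a / 4 * ‖s‖ ^ 2 :=
    calc b ^ 2 * ‖s‖ ^ 3 = b ^ 2 * ‖s‖ ^ 2 * ‖s‖ := by ring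
      _ ≤ b ^ 2 * ‖s‖ ^ 2 * (1 / (4 * b) * a) := by gcongr
      _ = b * a / 4 * ‖s‖ ^ 2 := by field_simp
  have hdec : 0 ≤ -⟪g, s⟫ := by nlinarith [sq_nonneg ‖g‖]
  nlinarith [mul_pos hb ha, sq_nonneg ‖s‖]

end InnerProductSpace

theorem statement10_general {n : ℕ} (P : En n → ℝ) (L₁ L₂ ε : ℝ)
    (hL₁ : 0 < L₁) (hL₂ : 0 < L₂) (hε : 0 < ε)
    (hP : ContDiff ℝ 2 P)
    (hhessLip : ∀ x x' : En n, ‖hessP P x - hessP P x'‖ ≤ L₂ * ‖x - x'‖)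
    (x s g gp : En n) (H : En n →L[ℝ] En n) (hH : IsSelfAdjoint H)
    (hg : ε ≤ ‖g‖)
    (hs : ‖s‖ ≤ 1 / (4 * Real.sqrt L₂) * Real.sqrt ‖g‖)
    (heq : (H + (Real.sqrt L₂ / 2 * Real.sqrt ‖g‖) • (1 : En n →L[ℝ] En n)) s = -g)
    (hpsd : ∀ v : En n,
      0 ≤ ⟪(H + (Real.sqrt L₂ / 2 * Real.sqrt ‖g‖) • (1 : En n →L[ℝ] En n)) v, v⟫)
    (hHnorm : ‖H‖ ≤ L₁)
    (hge : ‖gradient P x - g‖ ≤ min (1 / 96) (Real.sqrt L₂ / (16 * L₁)) * ε ^ ((3 : ℝ) / 2))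
    (hHe : ‖hessP P x - H‖ ≤ Real.sqrt L₂ / 12 * Real.sqrt ε)
    (hge' : ‖gradient P (x + s) - gp‖ ≤
      min (1 / 96) (Real.sqrt L₂ / (16 * L₁)) * ε ^ ((3 : ℝ) / 2)) :
    P (x + s) ≤ P x ∧ ‖gp‖ ≤ 1 / 3 * ‖g‖ := by
  set b := Real.sqrt L₂
  set a := Real.sqrt ‖g‖
  have hb : 0 < b := Real.sqrt_pos.2 hL₂
  have hb2 : b ^ 2 = L₂ := Real.sq_sqrt hL₂.le
  have hg₀ : 0 < ‖g‖ := hε.trans_le hg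
  have ha : 0 < a := Real.sqrt_pos.2 hg₀
  have hga : ‖g‖ = a ^ 2 := (Real.sq_sqrt hg₀.le).symm
  have hHs : g + H s = -((b / 2 * a) • s) := by
    rw [← neg_neg g, ← heq, add_apply, smul_apply, one_apply_eq_self]
    abel
  have hba : b * a ≤ 2 / 7 * L₁ := mul_le_of_regularized_step ha hb hga hHnorm hs heq
  have hdesc : ‖g‖ ^ 2 ≤ 8 / 7 * L₁ * -⟪g, s⟫ :=
    norm_sq_le_mul_neg_inner_of_regularized_step (by positivity) hH hpsd heq (by linarith)
  have hδ : min (1 / 96) (b / (16 * L₁)) * ε ^ ((3 : ℝ) / 2) ≤ b / (16 * L₁) * a ^ 3 := by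
    rw [Real.rpow_three_halves hε.le]
    gcongr
    exacts [min_le_right _ _, Real.sqrt_le_sqrt hg]
  have hHe' : ‖hessP P x - H‖ ≤ b / 12 * a := hHe.trans (by gcongr; exact Real.sqrt_le_sqrt hg)
  have hgrad (y : En n) : HasGradientAt P (gradient P y) y :=
    (hP.differentiable (by norm_num) y).hasGradientAt
  have hhess (y : En n) : HasFDerivAt (gradient P) (hessP P y) y :=
    ((contDiff_gradient hP).differentiable one_ne_zero y).hasFDerivAt
  rw [← hb2] at hhessLip
  constructor
  · have hT := abs_sub_sub_inner_sub_le_of_lipschitz_hessian hgrad hhess hhessLip x s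
    have hmodel := cubic_model_nonpos_of_regularized_step ha hb hL₁ hga hs hHs hdesc hge hδ hHe'
    linarith [le_abs_self (P (x + s) - P x - ⟪gradient P x, s⟫ - 1 / 2 * ⟪hessP P x s, s⟫)]
  · exact norm_le_third_of_regularized_step ha hb hL₁ hga hs hHs hba hge hge' hδ hHe'
      (norm_sub_sub_apply_le_of_lipschitz_fderiv hhess hhessLip x s)

/-- With `σ = √L₂/2`, `r = 1/(4√L₂)`, `ε₁ = min{1/96, √L₂/(16L₁)}·ε^{3/2}`,
`ε₂ = (√L₂/12)·ε^{1/2}`: if `‖g‖ ≥ ε`, `‖s‖ ≤ r‖g‖^{1/2}`, `(H + σ‖g‖^{1/2}I)s = −g` with the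
regularized operator PSD (dual multiplier `λ = 0`), `‖H‖ ≤ L₁`, and accurate estimates, then
`P(x+s) ≤ P(x)` and `‖g₊‖ ≤ ‖g‖/3`. -/
theorem statement10 {n : ℕ} (P : En n → ℝ) (L₁ L₂ ε : ℝ)
    (hL₁ : 0 < L₁) (hL₂ : 0 < L₂) (hε : 0 < ε)
    (hP : ContDiff ℝ 2 P)
    (hgradLip : ∀ x x' : En n, ‖gradient P x - gradient P x'‖ ≤ L₁ * ‖x - x'‖)
    (hhessLip : ∀ x x' : En n, ‖hessP P x - hessP P x'‖ ≤ L₂ * ‖x - x'‖)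
    (x s g gp : En n) (H : En n →L[ℝ] En n) (hH : IsSelfAdjoint H)
    (hg : ε ≤ ‖g‖)
    (hs : ‖s‖ ≤ 1 / (4 * Real.sqrt L₂) * Real.sqrt ‖g‖)
    (heq : (H + (Real.sqrt L₂ / 2 * Real.sqrt ‖g‖) • (1 : En n →L[ℝ] En n)) s = -g)
    (hpsd : ∀ v : En n,
      0 ≤ ⟪(H + (Real.sqrt L₂ / 2 * Real.sqrt ‖g‖) • (1 : En n →L[ℝ] En n)) v, v⟫)
    (hHnorm : ‖H‖ ≤ L₁)
    (hge : ‖gradient P x - g‖ ≤ min (1 / 96) (Real.sqrt L₂ / (16 * L₁)) * ε ^ ((3 : ℝ) / 2))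
    (hHe : ‖hessP P x - H‖ ≤ Real.sqrt L₂ / 12 * Real.sqrt ε)
    (hge' : ‖gradient P (x + s) - gp‖ ≤
      min (1 / 96) (Real.sqrt L₂ / (16 * L₁)) * ε ^ ((3 : ℝ) / 2)) :
    P (x + s) ≤ P x ∧ ‖gp‖ ≤ 1 / 3 * ‖g‖ :=
  statement10_general P L₁ L₂ ε hL₁ hL₂ hε hP hhessLip x s g gp H hH hg hs heq hpsd hHnorm hge hHe
    hge'
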